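/- arXiv:1902.07978 — 5 statements merged into one kernel-verified Lean document; each statement's English description precedes it below -/
import Mathlib

section
/- Let ω = e^{2πi/3}, and for l ∈ {0,1,2} define |ψ_l⟩ = (|00⟩ + ω^l|11⟩ + ω^{2l}|22⟩)/√3 and |Ψ_l⟩ = |ψ_l⟩^{⊗3} ∈ (ℂ^3)^{⊗6}. For any α_0,α_1,α_2 ∈ ℂ with Σ_l |α_l|^2 = 1, the state |Ψ⟩ = Σ_{l=0}^{2} α_l |Ψ_l⟩ has reduced density matrix I_3/3 on each of the six ℂ^3 factors. -/
/-!
Every `|Ψ_l⟩`, hence `|Ψ⟩`, is supported on the configurations `|aabbcc⟩` that are constant on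
the pairs of sites `{0,1}, {2,3}, {4,5}`. Changing a single site breaks its pair, so each reduced
density matrix is diagonal. On `|aabbcc⟩` the amplitude of `|Ψ⟩` is `A(a+b+c)/(3√3)` with
`A(s) = ∑_l α_l ω^{ls}` the discrete Fourier transform of `α` over `ℤ/3`. Fixing the pair that
contains site `j` and summing over the two other pairs, `a + b + c` runs three times through
`ℤ/3`, so the diagonal entry is `3 · ∑_s |A(s)|² / 27 = 3 · 3 ∑_l |α_l|² / 27 = 1/3` by Parseval.
-/

open Finset Function ComplexConjugate

namespace IsPrimitiveRoot

variable {ζ : ℂ} {n : ℕ}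

theorem sum_pow_mul_conj_pow (hζ : IsPrimitiveRoot ζ n) (l m : Fin n) :
    ∑ s : Fin n, ζ ^ ((l : ℕ) * s) * conj (ζ ^ ((m : ℕ) * s)) = if l = m then (n : ℂ) else 0 := by
  have hn : n ≠ 0 := (Fin.pos l).ne'
  have hζ0 : ζ ≠ 0 := hζ.ne_zero hn
  set u := ζ ^ (l : ℕ) / ζ ^ (m : ℕ) with hu
  have hterm (s : ℕ) : ζ ^ ((l : ℕ) * s) * conj (ζ ^ ((m : ℕ) * s)) = u ^ s := by
    rw [← RCLike.inv_eq_conj (by rw [norm_pow, hζ.norm'_eq_one hn, one_pow]), pow_mul, pow_mul,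
      div_pow, div_eq_mul_inv]
  simp_rw [hterm]
  rw [Fin.sum_univ_eq_sum_range (u ^ ·)]
  split_ifs with hlm
  · simp [hu, hlm, pow_ne_zero _ hζ0]
  · have hu1 : u ≠ 1 := fun h ↦ hlm <| Fin.ext <|
      hζ.pow_inj l.isLt m.isLt <| (div_eq_one_iff_eq (pow_ne_zero _ hζ0)).1 h
    have hun : u ^ n = 1 := by
      rw [hu, div_pow, ← pow_mul, ← pow_mul, pow_mul', pow_mul' ζ, hζ.pow_eq_one, one_pow, one_pow,
        div_one]
    exact eq_zero_of_ne_zero_of_mul_right_eq_zero (sub_ne_zero.2 hu1)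
      (by rw [geom_sum_mul, hun, sub_self])

theorem sum_dft_mul_conj (hζ : IsPrimitiveRoot ζ n) (α : Fin n → ℂ) :
    ∑ s : Fin n, (∑ l, α l * ζ ^ ((l : ℕ) * s)) * conj (∑ l, α l * ζ ^ ((l : ℕ) * s)) =
      n * ∑ l, α l * conj (α l) := by
  calc _ = ∑ l, ∑ m, α l * conj (α m) *
        ∑ s : Fin n, ζ ^ ((l : ℕ) * s) * conj (ζ ^ ((m : ℕ) * s)) := by
        simp only [map_sum, sum_mul_sum]
        simp only [mul_sum]
        rw [sum_comm]
        refine sum_congr rfl fun l _ ↦ ?_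
        rw [sum_comm]
        exact sum_congr rfl fun m _ ↦ sum_congr rfl fun s _ ↦ by simp only [map_mul]; ring
    _ = _ := by
        simp only [hζ.sum_pow_mul_conj_pow, mul_ite, mul_zero, sum_ite_eq, mem_univ, if_true,
          mul_sum]
        exact sum_congr rfl fun l _ ↦ mul_comm _ _

end IsPrimitiveRoot

section ReducedDensity

variable {ι Q R : Type*} [Fintype ι] [DecidableEq ι] [Fintype Q] [DecidableEq Q]
  [Semiring R] [StarRing R]

def reducedDensity (Ψ : (ι → Q) → R) (j : ι) (x x' : Q) : R :=
  ∑ f : ι → Q, if f j = x then Ψ f * star (Ψ (update f j x')) else 0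

theorem reducedDensity_self (Ψ : (ι → Q) → R) (j : ι) (x : Q) :
    reducedDensity Ψ j x x = ∑ f : ι → Q, if f j = x then Ψ f * star (Ψ f) else 0 :=
  sum_congr rfl fun f _ ↦ by split_ifs with h <;> [rw [← h, update_eq_self]; rfl]

end ReducedDensity

section Pairing

variable {α : Type*}

def IsPaired (f : Fin 6 → α) : Prop := f 0 = f 1 ∧ f 2 = f 3 ∧ f 4 = f 5

def pairUp (p : α × α × α) : Fin 6 → α := ![p.1, p.1, p.2.1, p.2.1, p.2.2, p.2.2]

-- `simp` rewriting with this, unlike unfolding `pairUp`, keeps the `Decidable` instance of an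
-- `if pairUp p j = x` well-typed.
theorem pairUp_apply (p : α × α × α) (j : Fin 6) :
    pairUp p j = if j < 2 then p.1 else if j < 4 then p.2.1 else p.2.2 := by
  fin_cases j <;> rfl

theorem pairUp_injective : Injective (pairUp (α := α)) := fun _ _ h ↦
  Prod.ext (congrFun h 0) (Prod.ext (congrFun h 2) (congrFun h 4))

theorem IsPaired.mem_range_pairUp {f : Fin 6 → α} (hf : IsPaired f) : f ∈ Set.range pairUp := by
  obtain ⟨h01, h23, h45⟩ := hf
  exact ⟨(f 0, f 2, f 4), funext fun i ↦ by fin_cases i <;> simp [pairUp, h01, h23, h45]⟩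

theorem IsPaired.eq_of_update [DecidableEq α] {f : Fin 6 → α} (hf : IsPaired f) {j : Fin 6}
    {x : α} (hu : IsPaired (update f j x)) : x = f j := by
  obtain ⟨h01, h23, h45⟩ := hf
  obtain ⟨u01, u23, u45⟩ := hu
  fin_cases j <;> simp_all

theorem sum_eq_sum_pairUp [Fintype α] {M : Type*} [AddCommMonoid M] (g : (Fin 6 → α) → M)
    (hg : ∀ f, ¬IsPaired f → g f = 0) : ∑ f, g f = ∑ p, g (pairUp p) :=
  (Fintype.sum_of_injective pairUp pairUp_injective _ g
    (fun f hf ↦ hg f fun h ↦ hf h.mem_range_pairUp) fun _ ↦ rfl).symm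

variable [Fintype α] [DecidableEq α] {R : Type*} [Semiring R] [StarRing R]

theorem reducedDensity_eq_zero_of_ne {Ψ : (Fin 6 → α) → R} (hΨ : ∀ f, ¬IsPaired f → Ψ f = 0)
    (j : Fin 6) {x x' : α} (hx : x ≠ x') : reducedDensity Ψ j x x' = 0 := by
  refine sum_eq_zero fun f _ ↦ ite_eq_right_iff.2 fun hfj ↦ ?_
  by_cases hf : IsPaired f
  · have hu : ¬IsPaired (update f j x') := fun hu ↦ hx (hfj ▸ hf.eq_of_update hu).symm
    rw [hΨ _ hu, star_zero, mul_zero]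
  · rw [hΨ f hf, zero_mul]

end Pairing

section Translation

variable {G M : Type*} [AddCommGroup G] [Fintype G] [AddCommMonoid M]

theorem sum_sum_add_add (φ : G → M) (y : G) :
    ∑ b, ∑ c, φ (y + b + c) = Fintype.card G • ∑ s, φ s := by
  have h (a : G) : ∑ c, φ (a + c) = ∑ s, φ s := Equiv.sum_comp (Equiv.addLeft a) φ
  simp only [h, sum_const, card_univ]

theorem sum_pairUp_ite_eq [DecidableEq G] (φ : G → M) (j : Fin 6) (x : G) :
    ∑ p : G × G × G, (if pairUp p j = x then φ (p.1 + p.2.1 + p.2.2) else 0) =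
      Fintype.card G • ∑ s, φ s := by
  simp only [Fintype.sum_prod_type, pairUp_apply]
  fin_cases j <;> simp [← sum_sum_add_add φ x, add_comm, add_left_comm]

theorem reducedDensity_of_pairUp [DecidableEq G] {R : Type*} [Semiring R] [StarRing R]
    {Ψ : (Fin 6 → G) → R} (A : G → R) (hΨ : ∀ f, ¬IsPaired f → Ψ f = 0)
    (hΨA : ∀ p, Ψ (pairUp p) = A (p.1 + p.2.1 + p.2.2)) (j : Fin 6) (x x' : G) :
    reducedDensity Ψ j x x' = if x = x' then Fintype.card G • ∑ s, A s * star (A s) else 0 := by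
  split_ifs with hx
  · subst hx
    rw [reducedDensity_self, sum_eq_sum_pairUp _ fun f hf ↦ by rw [hΨ f hf, zero_mul, ite_self]]
    simp only [hΨA]
    exact sum_pairUp_ite_eq (fun s ↦ A s * star (A s)) j x
  · exact reducedDensity_eq_zero_of_ne hΨ j hx

end Translation

/-- Masking a qutrit into six qutrits: with `ω = exp(2πi/3)`,
`|ψ_l⟩ = (|00⟩+ω^l|11⟩+ω^{2l}|22⟩)/√3`, `|Ψ_l⟩ = |ψ_l⟩^{⊗3} ∈ (ℂ³)^{⊗6}` and
`|Ψ⟩ = ∑ l α_l |Ψ_l⟩` with `∑ |α_l|² = 1`, every single-factor reduced density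
matrix of `|Ψ⟩⟨Ψ|` equals `I₃/3`. -/
theorem stmt_6 (ω : ℂ) (hω : ω = Complex.exp (2 * Real.pi * Complex.I / 3))
    (α : Fin 3 → ℂ) (hα : (∑ l : Fin 3, ‖α l‖ ^ 2) = 1)
    (Ψl : Fin 3 → (Fin 6 → Fin 3) → ℂ)
    (hΨl : ∀ (l : Fin 3) (f : Fin 6 → Fin 3),
      Ψl l f = if f 0 = f 1 ∧ f 2 = f 3 ∧ f 4 = f 5 then
        ω ^ ((l : ℕ) * ((f 0 : ℕ) + (f 2 : ℕ) + (f 4 : ℕ))) / (3 * (Real.sqrt 3 : ℂ)) else 0)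
    (Ψ : (Fin 6 → Fin 3) → ℂ) (hΨ : ∀ f, Ψ f = ∑ l : Fin 3, α l * Ψl l f) :
    ∀ (j : Fin 6) (x x' : Fin 3),
      (∑ f : Fin 6 → Fin 3,
        if f j = x then Ψ f * star (Ψ (Function.update f j x')) else 0)
      = if x = x' then (1 / 3 : ℂ) else 0 := by
  intro j x x'
  have hω3 : IsPrimitiveRoot ω 3 :=
    hω ▸ by exact_mod_cast Complex.isPrimitiveRoot_exp 3 (by norm_num)
  set A : Fin 3 → ℂ := fun s ↦ (∑ l, α l * ω ^ ((l : ℕ) * s)) / (3 * √3) with hA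
  have hΨ_off (f : Fin 6 → Fin 3) (hf : ¬IsPaired f) : Ψ f = 0 := by
    rw [hΨ]
    exact sum_eq_zero fun l _ ↦ by
      rw [hΨl, if_neg (show ¬(f 0 = f 1 ∧ f 2 = f 3 ∧ f 4 = f 5) from hf), mul_zero]
  have hΨ_pairUp (p : Fin 3 × Fin 3 × Fin 3) : Ψ (pairUp p) = A (p.1 + p.2.1 + p.2.2) := by
    have hval : ((p.1 + p.2.1 + p.2.2 : Fin 3) : ℕ) ≡ p.1 + p.2.1 + p.2.2 [MOD 3] := by
      simp only [Nat.ModEq, Fin.val_add]; omega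
    simp only [hΨ, hA, sum_div]
    refine sum_congr rfl fun l _ ↦ ?_
    rw [hΨl, if_pos ⟨rfl, rfl, rfl⟩, mul_div_assoc,
      pow_eq_pow_of_modEq (hval.mul_left _) hω3.pow_eq_one]
    rfl
  have hA_norm : ∑ s, A s * star (A s) = 1 / 9 := by
    have hα' : ∑ l, α l * conj (α l) = 1 := by
      simp only [Complex.mul_conj']
      exact_mod_cast hα
    have hc : (3 * (√3 : ℂ)) * conj (3 * (√3 : ℂ)) = 27 := by
      rw [Complex.mul_conj']; norm_num [mul_pow, ← Complex.ofReal_pow]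
    simp only [hA, Complex.star_def, map_div₀, div_mul_div_comm, hc, ← sum_div,
      hω3.sum_dft_mul_conj, hα']
    norm_num
  change reducedDensity Ψ j x x' = _
  rw [reducedDensity_of_pairUp A hΨ_off hΨ_pairUp, hA_norm, Fintype.card_fin]
  norm_num
end

section
/- Let d ≥ 2, ω = e^{2πi/d}, and for l ∈ {0,...,d−1} define |ψ_l⟩ = (1/√d) Σ_{k=0}^{d−1} ω^{kl} |kk⟩ and |Ψ_l⟩ = |ψ_l⟩^{⊗ d} ∈ (ℂ^d)^{⊗ 2d}. Then for any unit vector α ∈ ℂ^d, the state |Ψ_α⟩ = Σ_{l=0}^{d−1} α_l |Ψ_l⟩ is a unit vector, and its reduced density matrix on each of the 2d single-system factors equals I_d/d. In particular, the map |l⟩ ↦ |Ψ_l⟩ masks all d-level quantum states into 2d systems of dimension d. -/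
/-!
Each `|ψ_l⟩ = d^{-1/2} ∑_a ω^{al} |aa⟩` is maximally correlated, and `⟨ψ_{l'}|ψ_l⟩ = δ_{ll'}` by
orthogonality of the characters `a ↦ ω^{al}` of `ℤ/d`; hence the `|Ψ_l⟩` are orthonormal and
`|Ψ_α⟩` is a unit vector. In the reduced density matrix of a single system, a cross term
`|Ψ_l⟩⟨Ψ_{l'}|` with `l ≠ l'` carries the factor `⟨ψ_{l'}|ψ_l⟩ = 0` from a pair not containing
that system (one exists because `d ≥ 2`), while a diagonal term contributes `|α_l|² I/d`, since
every `|ψ_l⟩` has a maximally mixed marginal. Summing gives `I/d` for every `α`.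
-/

open Finset Function

theorem curry_update_apply {ι κ β : Type*} [DecidableEq ι] [DecidableEq κ] (f : ι × κ → β)
    (i₀ : ι) (s : κ) (x : β) (i : ι) :
    (fun k => update f (i₀, s) x (i, k)) =
      if i = i₀ then update (fun k => f (i₀, k)) s x else fun k => f (i, k) := by
  have := congrFun (curry_update f (i₀, s) x) i
  split_ifs with h
  · subst h; rwa [update_self] at this
  · rwa [update_of_ne h] at this

section ProductStates

variable {ι κ β R : Type*} [Fintype ι] [Fintype κ] [Fintype β] [DecidableEq ι] [DecidableEq κ]
  [CommSemiring R]

def prodState (u : ι → (κ → β) → R) (f : ι × κ → β) : R :=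
  ∏ i, u i (fun k => f (i, k))

theorem sum_prodState (u : ι → (κ → β) → R) :
    ∑ f, prodState u f = ∏ i, ∑ w, u i w := by
  rw [Finset.prod_univ_sum, Fintype.piFinset_univ]
  exact Fintype.sum_equiv (Equiv.curry ι κ β) _ _ fun _ => rfl

variable [StarRing R]

theorem sum_prodState_mul_star (u v : ι → (κ → β) → R) :
    ∑ f, prodState u f * star (prodState v f) = ∏ i, ∑ w, u i w * star (v i w) := by
  rw [← sum_prodState]
  refine sum_congr rfl fun f _ => ?_
  simp only [prodState, star_prod, ← prod_mul_distrib]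

theorem sum_ite_prodState_mul_star_update (u v : ι → (κ → β) → R) [DecidableEq β]
    (i₀ : ι) (s : κ) (x x' : β) :
    ∑ f, (if f (i₀, s) = x then prodState u f * star (prodState v (update f (i₀, s) x')) else 0) =
      (∑ w, if w s = x then u i₀ w * star (v i₀ (update w s x')) else 0) *
        ∏ i ∈ univ.erase i₀, ∑ w, u i w * star (v i w) := by
  set G : ι → (κ → β) → R := fun i w => if i = i₀ then
    (if w s = x then u i₀ w * star (v i₀ (update w s x')) else 0) else u i w * star (v i w)
  have hG : ∀ f : ι × κ → β,
      (if f (i₀, s) = x then prodState u f * star (prodState v (update f (i₀, s) x')) else 0) =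
        prodState G f := by
    intro f
    split_ifs with hf
    · simp only [prodState, star_prod, ← prod_mul_distrib, curry_update_apply]
      refine prod_congr rfl fun i _ => ?_
      split_ifs with hi
      · subst hi; simp [G, hf]
      · simp [G, hi]
    · exact (prod_eq_zero (mem_univ i₀) (by simp [G, hf])).symm
  rw [sum_congr rfl fun f _ => hG f, sum_prodState, ← mul_prod_erase univ _ (mem_univ i₀)]
  congr 1
  · simp [G]
  · refine prod_congr rfl fun i hi => ?_
    simp [G, ne_of_mem_erase hi]

end ProductStates

section DiagonalPair

variable {β : Type*} [Fintype β] [DecidableEq β]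

def diagonalPair (c : β → ℂ) (w : Fin 2 → β) : ℂ :=
  if w 0 = w 1 then c (w 0) else 0

theorem sum_diagonalPair_mul_star (c c' : β → ℂ) :
    ∑ w, diagonalPair c w * star (diagonalPair c' w) = ∑ a, c a * star (c' a) := by
  rw [← (piFinTwoEquiv fun _ => β).symm.sum_comp, Fintype.sum_prod_type]
  simp [diagonalPair]

theorem sum_ite_diagonalPair_mul_star_update (c c' : β → ℂ) (s : Fin 2) (x x' : β) :
    ∑ w, (if w s = x then diagonalPair c w * star (diagonalPair c' (update w s x')) else 0) =
      if x = x' then c x * star (c' x) else 0 := by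
  rw [← (piFinTwoEquiv fun _ => β).symm.sum_comp, Fintype.sum_prod_type]
  by_cases h : x = x'
  · subst h; fin_cases s <;> simp [diagonalPair]
  · fin_cases s <;> simp [diagonalPair, h, Ne.symm h]

end DiagonalPair

noncomputable def maskingState (ω : ℂ) (d : ℕ) (l : Fin d) : (Fin d × Fin 2 → Fin d) → ℂ :=
  prodState fun _ => diagonalPair fun a => ω ^ ((a : ℕ) * l) / (Real.sqrt d : ℂ)

theorem sum_ite_superposition_mul_star {L F R : Type*} [Fintype L] [DecidableEq L] [Fintype F]
    [CommSemiring R] [StarRing R] (Φ : L → F → R) (α : L → R) (P : F → Prop) [DecidablePred P]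
    (τ : F → F) (c : R)
    (hΦ : ∀ l l', ∑ f, (if P f then Φ l f * star (Φ l' (τ f)) else 0) = if l = l' then c else 0) :
    ∑ f, (if P f then (∑ l, α l * Φ l f) * star (∑ l, α l * Φ l (τ f)) else 0) =
      c * ∑ l, α l * star (α l) := by
  have hexpand (f : F) :
      (if P f then (∑ l, α l * Φ l f) * star (∑ l, α l * Φ l (τ f)) else 0) =
        ∑ l, ∑ l', α l * star (α l') * (if P f then Φ l f * star (Φ l' (τ f)) else 0) := by
    split_ifs
    · simp only [star_sum, star_mul', sum_mul_sum, mul_mul_mul_comm]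
    · simp
  calc _ = ∑ l, ∑ l', α l * star (α l') *
          ∑ f, (if P f then Φ l f * star (Φ l' (τ f)) else 0) := by
        simp only [hexpand, mul_sum]
        rw [sum_comm]
        exact sum_congr rfl fun l _ => sum_comm
    _ = c * ∑ l, α l * star (α l) := by
        simp only [hΦ, mul_ite, mul_zero, sum_ite_eq, mem_univ, if_true, sum_mul, mul_comm c]

theorem mul_star_self_of_norm_eq_one {z : ℂ} (hz : ‖z‖ = 1) : z * star z = 1 := by
  rw [Complex.star_def, Complex.mul_conj', hz]; norm_num

theorem Complex.sum_mul_star_self {ι : Type*} [Fintype ι] (z : ι → ℂ) :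
    ∑ i, z i * star (z i) = ((∑ i, ‖z i‖ ^ 2 : ℝ) : ℂ) := by
  push_cast
  simp only [Complex.star_def, Complex.mul_conj']

theorem div_sqrt_mul_star_div_sqrt (z w : ℂ) {r : ℝ} (hr : 0 ≤ r) :
    z / (Real.sqrt r : ℂ) * star (w / (Real.sqrt r : ℂ)) = z * star w / r := by
  rw [star_div₀, Complex.star_def, Complex.conj_ofReal, div_mul_div_comm, ← Complex.ofReal_mul,
    Real.mul_self_sqrt hr]

namespace IsPrimitiveRoot

variable {ω : ℂ} {d : ℕ}

theorem pow_mul_star_pow (h : IsPrimitiveRoot ω d) (hd : d ≠ 0) (n : ℕ) :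
    ω ^ n * star (ω ^ n) = 1 :=
  mul_star_self_of_norm_eq_one (by rw [norm_pow, h.norm'_eq_one hd, one_pow])

theorem sum_pow_mul_star_pow (h : IsPrimitiveRoot ω d) (l l' : Fin d) :
    ∑ k : Fin d, ω ^ ((k : ℕ) * l) * star (ω ^ ((k : ℕ) * l')) = if l = l' then (d : ℂ) else 0 := by
  have hnorm := h.pow_mul_star_pow (Fin.pos l).ne'
  set ζ := ω ^ (l : ℕ) * star (ω ^ (l' : ℕ))
  have hterm (k : ℕ) : ω ^ (k * l) * star (ω ^ (k * l')) = ζ ^ k := by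
    rw [mul_pow, ← star_pow, ← pow_mul', ← pow_mul']
  simp only [hterm, Fin.sum_univ_eq_sum_range (ζ ^ ·)]
  split_ifs with hl
  · subst hl
    simp [show ζ = 1 from hnorm l]
  · have hζ : ζ ≠ 1 := by
      have hζl' : ζ * ω ^ (l' : ℕ) = ω ^ (l : ℕ) := by
        rw [mul_assoc, mul_comm (star _), hnorm, mul_one]
      refine fun hζ => hl <| Fin.ext <| h.pow_inj l.isLt l'.isLt ?_
      rw [← hζl', hζ, one_mul]
    have hζd : ζ ^ d = 1 := by
      rw [← hterm, pow_mul, pow_mul, h.pow_eq_one, one_pow, one_pow, star_one, mul_one]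
    rw [geom_sum_eq hζ, hζd, sub_self, zero_div]

theorem sum_pow_div_sqrt_mul_star (h : IsPrimitiveRoot ω d) (l l' : Fin d) :
    ∑ a : Fin d,
        ω ^ ((a : ℕ) * l) / (Real.sqrt d : ℂ) * star (ω ^ ((a : ℕ) * l') / (Real.sqrt d : ℂ))
      = if l = l' then 1 else 0 := by
  have hd : (d : ℂ) ≠ 0 := Nat.cast_ne_zero.2 (Fin.pos l).ne'
  simp only [div_sqrt_mul_star_div_sqrt _ _ (Nat.cast_nonneg d), Complex.ofReal_natCast,
    ← sum_div, h.sum_pow_mul_star_pow]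
  split_ifs <;> simp [hd]

theorem sum_maskingState_mul_star (h : IsPrimitiveRoot ω d) (l l' : Fin d) :
    ∑ f, maskingState ω d l f * star (maskingState ω d l' f) = if l = l' then 1 else 0 := by
  simp only [maskingState, sum_prodState_mul_star, sum_diagonalPair_mul_star,
    h.sum_pow_div_sqrt_mul_star, prod_const, card_univ, Fintype.card_fin]
  split_ifs
  · exact one_pow d
  · exact zero_pow (Fin.pos l).ne'

theorem sum_ite_maskingState_mul_star_update (h : IsPrimitiveRoot ω d) (hd : 2 ≤ d)
    (l l' : Fin d) (p : Fin d × Fin 2) (x x' : Fin d) :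
    ∑ f, (if f p = x then maskingState ω d l f * star (maskingState ω d l' (update f p x'))
      else 0) = if l = l' then (if x = x' then (1 / d : ℂ) else 0) else 0 := by
  obtain ⟨i₀, s⟩ := p
  simp only [maskingState, sum_ite_prodState_mul_star_update, sum_diagonalPair_mul_star,
    sum_ite_diagonalPair_mul_star_update, h.sum_pow_div_sqrt_mul_star, prod_const,
    card_erase_of_mem (mem_univ i₀), card_univ, Fintype.card_fin]
  by_cases hl : l = l'
  · subst hl
    simp only [if_true, one_pow, mul_one]
    split_ifs
    · rw [div_sqrt_mul_star_div_sqrt _ _ (Nat.cast_nonneg d), h.pow_mul_star_pow (by omega)]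
      simp
    · rfl
  · simp only [if_neg hl]
    rw [zero_pow (by omega), mul_zero]

end IsPrimitiveRoot

/-- Masking all `d`-level states into `2d` systems of dimension `d`:
with `ω = exp(2πi/d)`, `|ψ_l⟩ = (1/√d) ∑ k ω^{kl}|kk⟩` and `|Ψ_l⟩ = |ψ_l⟩^{⊗d}`,
for any unit vector `α ∈ ℂ^d` the state `|Ψ_α⟩ = ∑ l α_l |Ψ_l⟩` is a unit vector
and every one of the `2d` single-system reduced density matrices equals `I_d/d`
(hence is independent of `α`, i.e. the map `|l⟩ ↦ |Ψ_l⟩` is a masker).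
The `2d` factors are indexed by `Fin d × Fin 2` (`d` pairs of two `ℂ^d` systems);
vectors in `(ℂ^d)^{⊗2d}` are functions `(Fin d × Fin 2 → Fin d) → ℂ`. -/
theorem stmt_7 (d : ℕ) (hd : 2 ≤ d)
    (ω : ℂ) (hω : ω = Complex.exp (2 * Real.pi * Complex.I / d))
    (α : Fin d → ℂ) (hα : (∑ l : Fin d, ‖α l‖ ^ 2) = 1)
    (Ψl : Fin d → ((Fin d × Fin 2) → Fin d) → ℂ)
    (hΨl : ∀ (l : Fin d) (f : (Fin d × Fin 2) → Fin d),
      Ψl l f = ∏ i : Fin d,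
        (if f (i, 0) = f (i, 1) then
          ω ^ ((f (i, 0) : ℕ) * (l : ℕ)) / (Real.sqrt d : ℂ) else 0))
    (Ψ : ((Fin d × Fin 2) → Fin d) → ℂ)
    (hΨ : ∀ f, Ψ f = ∑ l : Fin d, α l * Ψl l f) :
    (∑ f : (Fin d × Fin 2) → Fin d, ‖Ψ f‖ ^ 2) = 1 ∧
    ∀ (p : Fin d × Fin 2) (x x' : Fin d),
      (∑ f : (Fin d × Fin 2) → Fin d,
        if f p = x then Ψ f * star (Ψ (Function.update f p x')) else 0)
      = if x = x' then (1 / d : ℂ) else 0 := by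
  have hprim : IsPrimitiveRoot ω d := hω ▸ Complex.isPrimitiveRoot_exp d (by omega)
  obtain rfl : Ψl = maskingState ω d := funext₂ hΨl
  obtain rfl : Ψ = fun f => ∑ l, α l * maskingState ω d l f := funext hΨ
  have hα' : ∑ l, α l * star (α l) = 1 := by rw [Complex.sum_mul_star_self, hα, Complex.ofReal_one]
  refine ⟨?_, fun p x x' => ?_⟩
  · have hnorm := sum_ite_superposition_mul_star (maskingState ω d) α (fun _ => True) id 1
      (by simpa using hprim.sum_maskingState_mul_star)
    simp only [if_true, id, hα', mul_one, Complex.sum_mul_star_self] at hnorm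
    exact_mod_cast hnorm
  · beta_reduce
    rw [sum_ite_superposition_mul_star (maskingState ω d) α (fun f => f p = x) (update · p x') _
      (hprim.sum_ite_maskingState_mul_star_update hd · · p x x'), hα', mul_one]
end

section
/- Let d ≥ 3, let V, W be mutually orthogonal Latin squares of order d, and define |Φ_j⟩ = (1/√d) Σ_{k=1}^{d} |k⟩|V_{jk}⟩|W_{jk}⟩. For any unit vector α ∈ ℂ^d, the state |Φ⟩ = Σ_{j=1}^{d} α_j |Φ_j⟩ has all three single-party reduced density matrices equal to I_d/d. Hence the linear map |j⟩ ↦ |Φ_j⟩ masks all d-level quantum states into the tripartite system ℂ^d ⊗ ℂ^d ⊗ ℂ^d. -/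
/-- A Latin square: all rows and columns are bijections. -/
def IsLatinSquare {d : ℕ} (L : Fin d → Fin d → Fin d) : Prop :=
  (∀ j, Function.Bijective (fun k => L j k)) ∧ (∀ k, Function.Bijective (fun j => L j k))

/-!
Index the support of `Φ` by the cells `(j, k)` of the Latin squares: cell `(j, k)` carries the
amplitude `α j / √d` at the basis vector `|k⟩|V j k⟩|W j k⟩`. Once one party is kept, the two
traced-out coordinates already determine the cell (by orthogonality of `V` and `W` for the first
party, by the Latin property of the columns of `W`, resp. `V`, for the other two), so the reduced
matrix is diagonal. Its diagonal entry at `x` is the sum of `|α j|² / d` over the cells whose kept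
coordinate is `x`, and every row `j` contains exactly one such cell; the entry is therefore `1 / d`.
-/

open Function

variable {ι κ X Y R : Type*}

theorem sum_mul_star_sum_ite_of_injective [Fintype ι] [Fintype Y] [DecidableEq Y]
    [CommSemiring R] [StarRing R] {g : ι → Y} (hg : Injective g) (a b : ι → R) :
    ∑ y, (∑ i, if g i = y then a i else 0) * star (∑ i, if g i = y then b i else 0) =
      ∑ i, a i * star (b i) := by
  simp only [star_sum, apply_ite star, star_zero, Finset.sum_mul_sum, ite_mul, mul_ite, zero_mul,
    mul_zero]
  rw [Finset.sum_comm]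
  refine Finset.sum_congr rfl fun i _ => ?_
  rw [Finset.sum_comm]
  simp only [Finset.sum_ite_eq, Finset.mem_univ, if_true]
  rw [Finset.sum_eq_single i (fun j _ hj => if_neg fun h => hj (hg h).symm) (by simp), if_pos rfl]

theorem sum_mul_star_sum_ite_and_of_injective [Fintype ι] [Fintype Y] [DecidableEq X]
    [DecidableEq Y] [CommSemiring R] [StarRing R] (f : ι → X) {g : ι → Y} (hg : Injective g)
    (β : ι → R) (x x' : X) :
    ∑ y, (∑ i, if f i = x ∧ g i = y then β i else 0) *
        star (∑ i, if f i = x' ∧ g i = y then β i else 0) =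
      if x = x' then ∑ i, if f i = x then β i * star (β i) else 0 else 0 := by
  have hswap : ∀ z y i, (if f i = z ∧ g i = y then β i else 0) =
      if g i = y then (if f i = z then β i else 0) else 0 := fun z y i => by
    by_cases f i = z <;> simp [*]
  simp only [hswap]
  rw [sum_mul_star_sum_ite_of_injective hg]
  simp only [apply_ite star, star_zero, mul_ite, ite_mul, zero_mul, mul_zero, ← ite_and]
  split_ifs with hx
  · subst hx
    simp only [and_self]
  · refine Finset.sum_eq_zero fun i _ => if_neg fun h => hx (h.2.symm.trans h.1)

theorem sum_ite_eq_of_bijective [Fintype ι] [Fintype κ] [DecidableEq X] [AddCommMonoid R]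
    {h : ι → κ → X} (hh : ∀ j, Bijective (h j)) (c : ι → R) (x : X) :
    ∑ p : ι × κ, (if h p.1 p.2 = x then c p.1 else 0) = ∑ j, c j := by
  rw [Fintype.sum_prod_type]
  refine Finset.sum_congr rfl fun j _ => ?_
  obtain ⟨k, hk, hk_unique⟩ := (hh j).existsUnique x
  rw [Finset.sum_eq_single k (fun k' _ hk' => if_neg fun h => hk' (hk_unique k' h)) (by simp),
    if_pos hk]

theorem injective_snd_prodMk_of_injective {L : ι → κ → X}
    (hL : ∀ k, Injective (fun j => L j k)) : Injective (fun p : ι × κ => (p.2, L p.1 p.2)) := by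
  rintro ⟨j, k⟩ ⟨j', k'⟩ h
  simp only [Prod.mk.injEq] at h
  obtain ⟨rfl, h⟩ := h
  rw [(hL k).eq_iff.mp h]

theorem ofReal_inv_sqrt_mul_star {r : ℝ} (hr : 0 ≤ r) :
    ((Real.sqrt r : ℂ))⁻¹ * star ((Real.sqrt r : ℂ))⁻¹ = (r : ℂ)⁻¹ := by
  rw [star_inv₀, Complex.star_def, Complex.conj_ofReal, ← mul_inv, ← Complex.ofReal_mul,
    Real.mul_self_sqrt hr]

theorem sum_mul_star_eq_ite_of_bijective_of_injective [Fintype ι] [Fintype κ] [Fintype Y]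
    [DecidableEq X] [DecidableEq Y] [CommSemiring R] [StarRing R] {h : ι → κ → X}
    (hh : ∀ j, Bijective (h j)) {g : ι × κ → Y} (hg : Injective g) {α : ι → R}
    (hα : ∑ j, α j * star (α j) = 1) {s c : R} (hs : s * star s = c) {Ψ : X → Y → R}
    (hΨ : ∀ x y, Ψ x y = ∑ p : ι × κ, if h p.1 p.2 = x ∧ g p = y then α p.1 * s else 0)
    (x x' : X) :
    ∑ y, Ψ x y * star (Ψ x' y) = if x = x' then c else 0 := by
  simp only [hΨ]
  rw [sum_mul_star_sum_ite_and_of_injective (fun p => h p.1 p.2) hg]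
  congr 1
  rw [sum_ite_eq_of_bijective hh (fun j => α j * s * star (α j * s)), ← hs, ← one_mul (s * _),
    ← hα, Finset.sum_mul]
  simp only [star_mul']
  exact Finset.sum_congr rfl fun j _ => by ring

theorem stmt_13_general (d : ℕ) (V W : Fin d → Fin d → Fin d)
    (hV : IsLatinSquare V) (hW : IsLatinSquare W)
    (horth : Function.Bijective (fun p : Fin d × Fin d => (V p.1 p.2, W p.1 p.2)))
    (α : Fin d → ℂ) (hα : (∑ j : Fin d, ‖α j‖ ^ 2) = 1)
    (Φj : Fin d → Fin d × Fin d × Fin d → ℂ)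
    (hΦj : ∀ (j : Fin d) (t : Fin d × Fin d × Fin d),
      Φj j t = if V j t.1 = t.2.1 ∧ W j t.1 = t.2.2 then ((Real.sqrt d : ℂ))⁻¹ else 0)
    (Φ : Fin d × Fin d × Fin d → ℂ) (hΦ : ∀ t, Φ t = ∑ j : Fin d, α j * Φj j t) :
    (∀ x x' : Fin d, (∑ b : Fin d, ∑ c : Fin d, Φ (x, b, c) * star (Φ (x', b, c)))
        = if x = x' then (1 / d : ℂ) else 0) ∧
    (∀ x x' : Fin d, (∑ a : Fin d, ∑ c : Fin d, Φ (a, x, c) * star (Φ (a, x', c)))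
        = if x = x' then (1 / d : ℂ) else 0) ∧
    (∀ x x' : Fin d, (∑ a : Fin d, ∑ b : Fin d, Φ (a, b, x) * star (Φ (a, b, x')))
        = if x = x' then (1 / d : ℂ) else 0) := by
  set s : ℂ := ((Real.sqrt d : ℂ))⁻¹
  have hs : s * star s = 1 / d := by
    rw [ofReal_inv_sqrt_mul_star (Nat.cast_nonneg d), Complex.ofReal_natCast, one_div]
  have hα' : ∑ j, α j * star (α j) = 1 := by
    simp_rw [Complex.star_def, Complex.mul_conj']
    exact_mod_cast hα
  have hΦ_cells : ∀ a b c, Φ (a, b, c) = ∑ p : Fin d × Fin d,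
      if p.2 = a ∧ V p.1 p.2 = b ∧ W p.1 p.2 = c then α p.1 * s else 0 := by
    intro a b c
    rw [hΦ, Fintype.sum_prod_type]
    refine Finset.sum_congr rfl fun j _ => ?_
    simp only [hΦj, ite_and, Finset.sum_ite_eq', Finset.mem_univ, if_true, mul_ite, mul_zero]
  refine ⟨fun x x' => ?_, fun x x' => ?_, fun x x' => ?_⟩
  · simpa only [Fintype.sum_prod_type] using
      sum_mul_star_eq_ite_of_bijective_of_injective (h := fun _ k => k) (fun _ => bijective_id)
        horth.injective hα' hs (Ψ := fun x y => Φ (x, y.1, y.2))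
        (fun x y => by simp only [hΦ_cells, Prod.ext_iff]) x x'
  · simpa only [Fintype.sum_prod_type] using
      sum_mul_star_eq_ite_of_bijective_of_injective hV.1
        (injective_snd_prodMk_of_injective fun k => (hW.2 k).injective) hα' hs
        (Ψ := fun x y => Φ (y.1, x, y.2))
        (fun x y => by
          rw [hΦ_cells]
          exact Finset.sum_congr rfl fun p _ => if_congr (by rw [Prod.ext_iff]; tauto) rfl rfl)
        x x'
  · simpa only [Fintype.sum_prod_type] using
      sum_mul_star_eq_ite_of_bijective_of_injective hW.1
        (injective_snd_prodMk_of_injective fun k => (hV.2 k).injective) hα' hs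
        (Ψ := fun x y => Φ (y.1, y.2, x))
        (fun x y => by
          rw [hΦ_cells]
          exact Finset.sum_congr rfl fun p _ => if_congr (by rw [Prod.ext_iff]; tauto) rfl rfl)
        x x'

/-- Latin-square masking into three parties: for mutually orthogonal Latin squares
`V, W` of order `d ≥ 3` and `|Φ_j⟩ = (1/√d) ∑ k |k⟩|V_{jk}⟩|W_{jk}⟩`, the state
`|Φ⟩ = ∑ j α_j |Φ_j⟩` (any unit `α`) has all three single-party reduced density
matrices equal to `I_d/d`; hence `|j⟩ ↦ |Φ_j⟩` masks all `d`-level states. -/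
theorem stmt_13 (d : ℕ) (hd : 3 ≤ d) (V W : Fin d → Fin d → Fin d)
    (hV : IsLatinSquare V) (hW : IsLatinSquare W)
    (horth : Function.Bijective (fun p : Fin d × Fin d => (V p.1 p.2, W p.1 p.2)))
    (α : Fin d → ℂ) (hα : (∑ j : Fin d, ‖α j‖ ^ 2) = 1)
    (Φj : Fin d → Fin d × Fin d × Fin d → ℂ)
    (hΦj : ∀ (j : Fin d) (t : Fin d × Fin d × Fin d),
      Φj j t = if V j t.1 = t.2.1 ∧ W j t.1 = t.2.2 then ((Real.sqrt d : ℂ))⁻¹ else 0)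
    (Φ : Fin d × Fin d × Fin d → ℂ) (hΦ : ∀ t, Φ t = ∑ j : Fin d, α j * Φj j t) :
    (∀ x x' : Fin d, (∑ b : Fin d, ∑ c : Fin d, Φ (x, b, c) * star (Φ (x', b, c)))
        = if x = x' then (1 / d : ℂ) else 0) ∧
    (∀ x x' : Fin d, (∑ a : Fin d, ∑ c : Fin d, Φ (a, x, c) * star (Φ (a, x', c)))
        = if x = x' then (1 / d : ℂ) else 0) ∧
    (∀ x x' : Fin d, (∑ a : Fin d, ∑ b : Fin d, Φ (a, b, x) * star (Φ (a, b, x')))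
        = if x = x' then (1 / d : ℂ) else 0) :=
  stmt_13_general d V W hV hW horth α hα Φj hΦj Φ hΦ
end

section
/- Let d ≥ 3 be odd. Define |Φ_j⟩ = (1/√d) Σ_{k=0}^{d−1} |k⟩ ⊗ |k − j mod d⟩ ⊗ |j + k mod d⟩ ∈ (ℂ^d)^{⊗3} for j = 0,...,d−1. Then for any unit vector α ∈ ℂ^d, the state Σ_j α_j |Φ_j⟩ has reduced density matrix I_d/d on each of the three factors. In particular, every d-level quantum state can be masked in ℂ^d ⊗ ℂ^d ⊗ ℂ^d when d is odd. -/
/-- Tripartite masking for odd `d ≥ 3`: with basis vectors indexed by `ℤ/dℤ` and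
`|Φ_j⟩ = (1/√d) ∑ k |k⟩|k−j⟩|j+k⟩ ∈ (ℂ^d)^{⊗3}`, every state `∑ j α_j |Φ_j⟩`
with `α` a unit vector has reduced density matrix `I_d/d` on each of the three
factors; i.e. every `d`-level state can be masked in `ℂ^d ⊗ ℂ^d ⊗ ℂ^d`. -/
theorem stmt_14 (d : ℕ) [NeZero d] (hd : 3 ≤ d) (hodd : Odd d)
    (α : ZMod d → ℂ) (hα : (∑ j : ZMod d, ‖α j‖ ^ 2) = 1)
    (Φj : ZMod d → ZMod d × ZMod d × ZMod d → ℂ)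
    (hΦj : ∀ (j : ZMod d) (t : ZMod d × ZMod d × ZMod d),
      Φj j t = if t.2.1 = t.1 - j ∧ t.2.2 = j + t.1 then ((Real.sqrt d : ℂ))⁻¹ else 0)
    (Φ : ZMod d × ZMod d × ZMod d → ℂ) (hΦ : ∀ t, Φ t = ∑ j : ZMod d, α j * Φj j t) :
    (∀ x x' : ZMod d, (∑ b : ZMod d, ∑ c : ZMod d, Φ (x, b, c) * star (Φ (x', b, c)))
        = if x = x' then (1 / d : ℂ) else 0) ∧
    (∀ x x' : ZMod d, (∑ a : ZMod d, ∑ c : ZMod d, Φ (a, x, c) * star (Φ (a, x', c)))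
        = if x = x' then (1 / d : ℂ) else 0) ∧
    (∀ x x' : ZMod d, (∑ a : ZMod d, ∑ b : ZMod d, Φ (a, b, x) * star (Φ (a, b, x')))
        = if x = x' then (1 / d : ℂ) else 0) := by
  set s : ℂ := ((Real.sqrt d : ℂ))⁻¹ with hs
  -- 2 is invertible mod d
  have h2 : IsUnit (2 : ZMod d) := by
    have hc : Nat.Coprime 2 d := Nat.coprime_two_left.mpr hodd
    have := (ZMod.isUnit_iff_coprime 2 d).mpr hc
    simpa using this
  have two_cancel : ∀ u v : ZMod d, u + u = v + v → u = v := by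
    intro u v h
    refine h2.mul_left_cancel ?_
    rw [two_mul, two_mul]; exact h
  -- closed form of Φ
  have hform : ∀ a b c : ZMod d, Φ (a, b, c)
      = if c = a - b + a then α (a - b) * s else 0 := by
    intro a b c
    rw [hΦ]
    have hterm : ∀ j : ZMod d,
        α j * Φj j (a, b, c) = if j = a - b then (if c = j + a then α j * s else 0) else 0 := by
      intro j
      rw [hΦj]
      by_cases hj : j = a - b
      · subst hj
        have : a - (a - b) = b := by ring
        simp [this, mul_ite]
      · have hb : ¬ (b = a - j) := by
          intro hb; apply hj; rw [hb]; ring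
        simp [hb, hj]
    rw [Finset.sum_congr rfl (fun j _ => hterm j), Finset.sum_ite_eq' Finset.univ (a - b)]
    simp
  -- key product identity
  have hss : s * star s = (d : ℂ)⁻¹ := by
    have hstar : star s = s := by
      rw [hs]
      simp [Complex.star_def, Complex.conj_ofReal]
    rw [hstar, hs, ← mul_inv, ← Complex.ofReal_mul,
      Real.mul_self_sqrt (by positivity)]
    push_cast
    ring
  have hkey : ∀ z : ℂ, (z * s) * star (z * s) = (‖z‖ : ℂ) ^ 2 / d := by
    intro z
    have h1 : (z * s) * star (z * s) = (z * star z) * (s * star s) := by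
      rw [star_mul]; ring
    rw [h1, hss, show z * star z = (‖z‖ : ℂ) ^ 2 from Complex.mul_conj' z]
    ring
  have hαC : (∑ j : ZMod d, ((‖α j‖ : ℂ)) ^ 2) = 1 := by
    have := congrArg (fun r : ℝ => (r : ℂ)) hα
    push_cast at this
    exact this
  refine ⟨?_, ?_, ?_⟩
  · -- first factor
    intro x x'
    by_cases hxx : x = x'
    · subst hxx
      rw [if_pos rfl]
      simp only [hform]
      have hinner : ∀ b : ZMod d,
          (∑ c : ZMod d, (if c = x - b + x then α (x - b) * s else 0)
            * star (if c = x - b + x then α (x - b) * s else 0))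
          = (‖α (x - b)‖ : ℂ) ^ 2 / d := by
        intro b
        have hpt : ∀ c : ZMod d,
            (if c = x - b + x then α (x - b) * s else 0)
              * star (if c = x - b + x then α (x - b) * s else 0)
            = if c = x - b + x then (α (x - b) * s) * star (α (x - b) * s) else 0 := by
          intro c; split_ifs <;> simp
        rw [Finset.sum_congr rfl (fun c _ => hpt c),
          Finset.sum_ite_eq' Finset.univ (x - b + x), if_pos (Finset.mem_univ _)]
        exact hkey _
      rw [Finset.sum_congr rfl (fun b _ => hinner b), ← Finset.sum_div]
      rw [Fintype.sum_equiv (Equiv.subLeft x)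
        (fun b => ((‖α (x - b)‖ : ℂ)) ^ 2) (fun j => ((‖α j‖ : ℂ)) ^ 2)
        (fun b => rfl), hαC]
    · rw [if_neg hxx]
      refine Finset.sum_eq_zero fun b _ => Finset.sum_eq_zero fun c _ => ?_
      simp only [hform]
      split_ifs with h1 h2
      · exfalso
        apply hxx
        apply two_cancel
        have h3 : x - b + x = x' - b + x' := h1 ▸ h2
        linear_combination h3
      all_goals simp
  · -- second factor
    intro x x'
    by_cases hxx : x = x'
    · subst hxx
      rw [if_pos rfl]
      simp only [hform]
      have hinner : ∀ a : ZMod d,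
          (∑ c : ZMod d, (if c = a - x + a then α (a - x) * s else 0)
            * star (if c = a - x + a then α (a - x) * s else 0))
          = (‖α (a - x)‖ : ℂ) ^ 2 / d := by
        intro a
        have hpt : ∀ c : ZMod d,
            (if c = a - x + a then α (a - x) * s else 0)
              * star (if c = a - x + a then α (a - x) * s else 0)
            = if c = a - x + a then (α (a - x) * s) * star (α (a - x) * s) else 0 := by
          intro c; split_ifs <;> simp
        rw [Finset.sum_congr rfl (fun c _ => hpt c),
          Finset.sum_ite_eq' Finset.univ (a - x + a), if_pos (Finset.mem_univ _)]
        exact hkey _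
      rw [Finset.sum_congr rfl (fun a _ => hinner a), ← Finset.sum_div]
      rw [Fintype.sum_equiv (Equiv.subRight x)
        (fun a => ((‖α (a - x)‖ : ℂ)) ^ 2) (fun j => ((‖α j‖ : ℂ)) ^ 2)
        (fun a => rfl), hαC]
    · rw [if_neg hxx]
      refine Finset.sum_eq_zero fun a _ => Finset.sum_eq_zero fun c _ => ?_
      simp only [hform]
      split_ifs with h1 h2
      · exfalso
        apply hxx
        have h3 : a - x + a = a - x' + a := h1 ▸ h2
        linear_combination - h3
      all_goals simp
  · -- third factor
    intro x x'
    by_cases hxx : x = x'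
    · subst hxx
      rw [if_pos rfl]
      simp only [hform]
      have hinner : ∀ a : ZMod d,
          (∑ b : ZMod d, (if x = a - b + a then α (a - b) * s else 0)
            * star (if x = a - b + a then α (a - b) * s else 0))
          = (‖α (x - a)‖ : ℂ) ^ 2 / d := by
        intro a
        have hcond : ∀ b : ZMod d, (x = a - b + a) ↔ (b = a - x + a) := by
          intro b
          constructor <;> intro h <;> linear_combination h
        have hpt : ∀ b : ZMod d,
            (if x = a - b + a then α (a - b) * s else 0)
              * star (if x = a - b + a then α (a - b) * s else 0)
            = if b = a - x + a then (α (a - b) * s) * star (α (a - b) * s) else 0 := by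
          intro b
          rw [show (if x = a - b + a then α (a - b) * s else 0)
              = if b = a - x + a then α (a - b) * s else 0 from by
            simp only [hcond b]]
          split_ifs <;> simp
        rw [Finset.sum_congr rfl (fun b _ => hpt b),
          Finset.sum_ite_eq' Finset.univ (a - x + a), if_pos (Finset.mem_univ _)]
        have hab : a - (a - x + a) = x - a := by ring
        rw [hab]
        exact hkey _
      rw [Finset.sum_congr rfl (fun a _ => hinner a), ← Finset.sum_div]
      rw [Fintype.sum_equiv (Equiv.subLeft x)
        (fun a => ((‖α (x - a)‖ : ℂ)) ^ 2) (fun j => ((‖α j‖ : ℂ)) ^ 2)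
        (fun a => rfl), hαC]
    · rw [if_neg hxx]
      refine Finset.sum_eq_zero fun a _ => Finset.sum_eq_zero fun b _ => ?_
      simp only [hform]
      split_ifs with h1 h2
      · exact absurd (h1.trans h2.symm) hxx
      all_goals simp
end

section
/- For d = 4, define the 12 product basis labels from the arrays U_{jk}=k, V = [[1,2,3,4],[2,1,4,3],[3,4,1,2],[4,3,2,1]], W = [[1,2,3,4],[4,3,2,1],[2,1,4,3],[3,4,1,2]], and set |Φ_j⟩ = (1/2) Σ_{k=1}^{4} |k⟩|V_{jk}⟩|W_{jk}⟩ ∈ (ℂ^4)^{⊗3}. Then for any α,β,γ,δ ∈ ℂ with |α|^2+|β|^2+|γ|^2+|δ|^2 = 1, the state α|Φ_1⟩+β|Φ_2⟩+γ|Φ_3⟩+δ|Φ_4⟩ has all three single-party reduced density matrices equal to I_4/4. -/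
/-!
Write `Φ = ∑_{j,k} c_j |k, V_{jk}, W_{jk}⟩` with `c_j = α_j / 2`. The reduced density of one
party is the sum of `c_j c̄_{j'}` over pairs of terms whose labels agree on the other two parties.
Those two labels determine the term `(j, k)`: for the first party because `V` and `W` are
orthogonal, for the second and third because the columns of `W`, resp. `V`, are injective. So only
diagonal pairs survive, and since every row of a Latin square takes each value exactly once, the
diagonal entries all equal `∑ |c_j|² = 1/4`.
-/

open Finset Function

variable {I J K X Y R : Type*}

theorem sum_mul_star_of_injective [CommSemiring R] [StarRing R] [Fintype I] [Fintype Y]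
    [DecidableEq X] [DecidableEq Y]
    (c : I → R) (g : I → X) {h : I → Y} (hh : Injective h) (x x' : X) :
    ∑ y, (∑ i, if g i = x ∧ h i = y then c i else 0) *
        star (∑ i, if g i = x' ∧ h i = y then c i else 0) =
      if x = x' then ∑ i with g i = x, c i * star (c i) else 0 := by
  classical
  have hy (i i' : I) : (∑ y, (if g i = x ∧ h i = y then c i else 0) *
      star (if g i' = x' ∧ h i' = y then c i' else 0)) =
      if i = i' then (if g i = x ∧ g i = x' then c i * star (c i) else 0) else 0 := by
    split_ifs with hi hg
    · subst hi
      rw [Fintype.sum_eq_single (h i) fun y hy => by simp [Ne.symm hy], if_pos ⟨hg.1, rfl⟩, if_pos ⟨hg.2, rfl⟩]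
    · subst hi
      exact sum_eq_zero fun y _ => by split_ifs <;> simp_all
    · refine sum_eq_zero fun y _ => ?_
      split_ifs with h1 h2
      · exact absurd (hh (h1.2.trans h2.2.symm)) hi
      all_goals simp
  calc _ = ∑ i, ∑ i', ∑ y, (if g i = x ∧ h i = y then c i else 0) *
          star (if g i' = x' ∧ h i' = y then c i' else 0) := by
        simp only [star_sum, sum_mul_sum]
        rw [sum_comm]
        exact sum_congr rfl fun i _ => sum_comm
    _ = ∑ i, if g i = x ∧ g i = x' then c i * star (c i) else 0 := by
        simp only [hy, sum_ite_eq, mem_univ, if_true]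
    _ = _ := by
        split_ifs with hx
        · subst hx
          simp [sum_filter]
        · exact sum_eq_zero fun i _ => if_neg fun h => hx (h.1.symm.trans h.2)

theorem sum_filter_prod_of_bijective [Fintype J] [Fintype K] [DecidableEq X] {M : Type*}
    [AddCommMonoid M] (f : J → M) {g : J → K → X} (hg : ∀ j, Bijective (g j)) (x : X) :
    ∑ i : J × K with g i.1 i.2 = x, f i.1 = ∑ j, f j := by
  rw [sum_filter, Fintype.sum_prod_type]
  refine sum_congr rfl fun j _ => ?_
  obtain ⟨k, hk⟩ := (hg j).2 x
  rw [Fintype.sum_eq_single k fun k' hk' => if_neg fun h => hk' ((hg j).1 (h.trans hk.symm)),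
    if_pos hk]

theorem sum_sum_mul_star_eq_ite [CommSemiring R] [StarRing R] [Fintype J] [Fintype K] [Fintype Y]
    [DecidableEq X] [DecidableEq Y] {c : J → R} {g : J → K → X} {h : J × K → Y × Y}
    (hg : ∀ j, Bijective (g j)) (hh : Injective h) {ψ : X → Y → Y → R}
    (hψ : ∀ x a b, ψ x a b =
      ∑ i : J × K, if g i.1 i.2 = x ∧ h i = (a, b) then c i.1 else 0)
    (x x' : X) :
    ∑ a, ∑ b, ψ x a b * star (ψ x' a b) = if x = x' then ∑ j, c j * star (c j) else 0 := by
  simp_rw [← Fintype.sum_prod_type' fun a b => ψ _ a b * star (ψ _ a b), hψ]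
  rw [sum_mul_star_of_injective _ (fun i : J × K => g i.1 i.2) hh,
    sum_filter_prod_of_bijective (fun j => c j * star (c j)) hg]

structure IsLatinRectangle (L : J → K → K) : Prop where
  bijective_row : ∀ j, Bijective (L j)
  injective_col : ∀ k, Injective (L · k)

def IsOrthogonal (V W : J → K → K) : Prop :=
  Injective fun i : J × K => (V i.1 i.2, W i.1 i.2)

theorem IsLatinRectangle.injective_col_pair {L : J → K → K} (hL : IsLatinRectangle L) :
    Injective fun i : J × K => (i.2, L i.1 i.2) := by
  rintro ⟨j, k⟩ ⟨j', k'⟩ h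
  simp only [Prod.mk.injEq] at h ⊢
  obtain ⟨rfl, h⟩ := h
  exact ⟨hL.injective_col k h, rfl⟩

theorem sum_ite_eq_sum_prod_ite [Fintype J] [Fintype K] [DecidableEq K] [AddCommMonoid R]
    (V W : J → K → K) (c : J → R) (t : K × K × K) :
    (∑ j, if V j t.1 = t.2.1 ∧ W j t.1 = t.2.2 then c j else 0) =
      ∑ i : J × K, if (i.2, V i.1 i.2, W i.1 i.2) = t then c i.1 else 0 := by
  rw [Fintype.sum_prod_type]
  refine sum_congr rfl fun j _ => ?_
  rw [Fintype.sum_eq_single t.1 fun k hk => if_neg fun h => hk (congrArg Prod.fst h)]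
  simp only [Prod.ext_iff, true_and]

theorem reducedDensities_eq_of_isOrthogonal [CommSemiring R] [StarRing R] [Fintype J] [Fintype K]
    [DecidableEq K] {V W : J → K → K} {c : J → R} {Φ : K × K × K → R}
    (hV : IsLatinRectangle V) (hW : IsLatinRectangle W) (hVW : IsOrthogonal V W)
    (hΦ : ∀ t, Φ t = ∑ j, if V j t.1 = t.2.1 ∧ W j t.1 = t.2.2 then c j else 0) :
    (∀ x x' : K, (∑ b : K, ∑ c' : K, Φ (x, b, c') * star (Φ (x', b, c')))
        = if x = x' then ∑ j, c j * star (c j) else 0) ∧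
    (∀ x x' : K, (∑ a : K, ∑ c' : K, Φ (a, x, c') * star (Φ (a, x', c')))
        = if x = x' then ∑ j, c j * star (c j) else 0) ∧
    (∀ x x' : K, (∑ a : K, ∑ b : K, Φ (a, b, x) * star (Φ (a, b, x')))
        = if x = x' then ∑ j, c j * star (c j) else 0) := by
  have hΦ' (t : K × K × K) := (hΦ t).trans (sum_ite_eq_sum_prod_ite V W c t)
  simp only [hΦ', Prod.ext_iff]
  refine ⟨sum_sum_mul_star_eq_ite (g := fun _ k => k) (fun _ => bijective_id) hVW ?_,
    sum_sum_mul_star_eq_ite hV.bijective_row hW.injective_col_pair ?_,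
    sum_sum_mul_star_eq_ite hW.bijective_row hV.injective_col_pair ?_⟩ <;>
  · intros
    refine sum_congr rfl fun i _ => if_congr ?_ rfl rfl
    grind

/-- The explicit `d = 4` Latin-square masking scheme.  With the mutually
orthogonal Latin squares `V, W` below (symbols `1,…,4` written as `Fin 4`) and
`|Φ_j⟩ = (1/2) ∑ k |k⟩|V_{jk}⟩|W_{jk}⟩ ∈ (ℂ⁴)^{⊗3}`, every state
`α|Φ₁⟩+β|Φ₂⟩+γ|Φ₃⟩+δ|Φ₄⟩` with `|α|²+|β|²+|γ|²+|δ|² = 1` has all three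
single-party reduced density matrices equal to `I₄/4`. -/
theorem stmt_16 (α β γ δ : ℂ) (h : ‖α‖ ^ 2 + ‖β‖ ^ 2 + ‖γ‖ ^ 2 + ‖δ‖ ^ 2 = 1)
    (V W : Fin 4 → Fin 4 → Fin 4)
    (hV : V = fun j k => !![(0 : Fin 4), 1, 2, 3; 1, 0, 3, 2; 2, 3, 0, 1; 3, 2, 1, 0] j k)
    (hW : W = fun j k => !![(0 : Fin 4), 1, 2, 3; 3, 2, 1, 0; 1, 0, 3, 2; 2, 3, 0, 1] j k)
    (Φj : Fin 4 → Fin 4 × Fin 4 × Fin 4 → ℂ)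
    (hΦj : ∀ (j : Fin 4) (t : Fin 4 × Fin 4 × Fin 4),
      Φj j t = if V j t.1 = t.2.1 ∧ W j t.1 = t.2.2 then (1 / 2 : ℂ) else 0)
    (Φ : Fin 4 × Fin 4 × Fin 4 → ℂ)
    (hΦ : ∀ t, Φ t = α * Φj 0 t + β * Φj 1 t + γ * Φj 2 t + δ * Φj 3 t) :
    (∀ x x' : Fin 4, (∑ b : Fin 4, ∑ c : Fin 4, Φ (x, b, c) * star (Φ (x', b, c)))
        = if x = x' then (1 / 4 : ℂ) else 0) ∧
    (∀ x x' : Fin 4, (∑ a : Fin 4, ∑ c : Fin 4, Φ (a, x, c) * star (Φ (a, x', c)))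
        = if x = x' then (1 / 4 : ℂ) else 0) ∧
    (∀ x x' : Fin 4, (∑ a : Fin 4, ∑ b : Fin 4, Φ (a, b, x) * star (Φ (a, b, x')))
        = if x = x' then (1 / 4 : ℂ) else 0) := by
  set c : Fin 4 → ℂ := fun j => ![α, β, γ, δ] j / 2
  have hΦc : ∀ t, Φ t = ∑ j, if V j t.1 = t.2.1 ∧ W j t.1 = t.2.2 then c j else 0 := by
    intro t
    simp [hΦ, hΦj, Fin.sum_univ_four, c, div_eq_mul_inv, mul_comm]
  have hc : ∑ j, c j * star (c j) = 1 / 4 := by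
    have hnorm : α * star α + β * star β + γ * star γ + δ * star δ = 1 := by
      simp only [Complex.star_def, Complex.mul_conj, Complex.normSq_eq_norm_sq]
      exact_mod_cast h
    simp only [Fin.sum_univ_four, c, star_div₀, star_ofNat, Matrix.cons_val_zero,
      Matrix.cons_val_one, Matrix.cons_val]
    linear_combination hnorm / 4
  have hVl : IsLatinRectangle V := hV ▸ ⟨by decide, by decide⟩
  have hWl : IsLatinRectangle W := hW ▸ ⟨by decide, by decide⟩
  have hVW : IsOrthogonal V W := hV ▸ hW ▸ by unfold IsOrthogonal; decide
  rw [← hc]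
  exact reducedDensities_eq_of_isOrthogonal hVl hWl hVW hΦc
end
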